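/- Let ξ be real and for x = (x0,x1,x2) ∈ ℤ³ set ‖x‖ = max(|x0|,|x1|,|x2|) and L(x) = max(|x0ξ - x1|, |x0ξ² - x2|). Then for x, y ∈ ℤ³ and any indices r,s,t,u ∈ {0,1,2} with s - r = u - t, we have |x_r y_u - x_s y_t| ≤ C(ξ)·(‖x‖·L(y) + ‖y‖·L(x)) for a constant C(ξ) depending only on ξ. -/

import Mathlib

noncomputable def normT (x : Fin 3 → ℤ) : ℝ :=
  max (|(x 0 : ℝ)|) (max (|(x 1 : ℝ)|) (|(x 2 : ℝ)|))

noncomputable def Lf (ξ : ℝ) (x : Fin 3 → ℤ) : ℝ :=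
  max (|(x 0 : ℝ) * ξ - (x 1 : ℝ)|) (|(x 0 : ℝ) * ξ ^ 2 - (x 2 : ℝ)|)

/-! Write `δᵢ(z) = z₀ ξ^i - zᵢ`, so that `|δᵢ(z)| ≤ L(z)`. Expanding `xᵢ = x₀ ξ^i - δᵢ(x)` and
`yⱼ = y₀ ξ^j - δⱼ(y)` shows that `xᵢ yⱼ` differs from `x₀ y₀ ξ^(i+j)` by `O(‖y‖ L(x) + ‖x‖ L(y))`.
The main term depends only on `i + j`, and `r + u = s + t`, so it cancels in `x_r y_u - x_s y_t`. -/

lemma mul_eq_pow_sub {R : Type*} [CommRing R] (ξ a b a₀ b₀ : R) (i j : ℕ) :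
    a * b = a₀ * b₀ * ξ ^ (i + j) - (b₀ * ξ ^ j * (a₀ * ξ ^ i - a) + a * (b₀ * ξ ^ j - b)) := by
  ring

lemma abs_pow_le_one_add_abs_add_sq (ξ : ℝ) (i : Fin 3) : |ξ ^ (i : ℕ)| ≤ 1 + |ξ| + ξ ^ 2 := by
  have := abs_nonneg ξ
  have := sq_nonneg ξ
  fin_cases i <;> simp <;> linarith

lemma abs_coord_le_normT (z : Fin 3 → ℤ) (i : Fin 3) : |(z i : ℝ)| ≤ normT z := by
  unfold normT
  fin_cases i
  · exact le_max_left _ _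
  · exact (le_max_left _ _).trans (le_max_right _ _)
  · exact (le_max_right _ _).trans (le_max_right _ _)

lemma normT_nonneg (z : Fin 3 → ℤ) : 0 ≤ normT z :=
  (abs_nonneg _).trans (abs_coord_le_normT z 0)

lemma Lf_nonneg (ξ : ℝ) (z : Fin 3 → ℤ) : 0 ≤ Lf ξ z :=
  (abs_nonneg _).trans (le_max_left _ _)

lemma abs_mul_pow_sub_le_Lf (ξ : ℝ) (z : Fin 3 → ℤ) (i : Fin 3) :
    |(z 0 : ℝ) * ξ ^ (i : ℕ) - z i| ≤ Lf ξ z := by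
  unfold Lf
  fin_cases i
  · simp
  · simp
  · exact le_max_right _ _

lemma abs_mul_sub_mul_pow_le (ξ : ℝ) (x y : Fin 3 → ℤ) (i j : Fin 3) :
    |(x i : ℝ) * y j - x 0 * y 0 * ξ ^ ((i : ℕ) + j)|
      ≤ (1 + |ξ| + ξ ^ 2) * (normT y * Lf ξ x) + normT x * Lf ξ y := by
  rw [mul_eq_pow_sub ξ (x i : ℝ) (y j) (x 0) (y 0) i j, sub_sub_cancel_left, abs_neg]
  have hy₀ξ : |(y 0 : ℝ) * ξ ^ (j : ℕ)| ≤ normT y * (1 + |ξ| + ξ ^ 2) := by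
    rw [abs_mul]
    exact mul_le_mul (abs_coord_le_normT y 0) (abs_pow_le_one_add_abs_add_sq ξ j)
      (abs_nonneg _) (normT_nonneg y)
  calc _ ≤ _ := abs_add_le _ _
    _ = |(y 0 : ℝ) * ξ ^ (j : ℕ)| * |(x 0 : ℝ) * ξ ^ (i : ℕ) - x i|
          + |(x i : ℝ)| * |(y 0 : ℝ) * ξ ^ (j : ℕ) - y j| := by
      rw [abs_mul _ ((x 0 : ℝ) * _ - _), abs_mul (x i : ℝ)]
    _ ≤ normT y * (1 + |ξ| + ξ ^ 2) * Lf ξ x + normT x * Lf ξ y :=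
      add_le_add
        (mul_le_mul hy₀ξ (abs_mul_pow_sub_le_Lf ξ x i) (abs_nonneg _)
          ((abs_nonneg _).trans hy₀ξ))
        (mul_le_mul (abs_coord_le_normT x i) (abs_mul_pow_sub_le_Lf ξ y j) (abs_nonneg _)
          (normT_nonneg x))
    _ = _ := by ring

theorem minor_estimate (ξ : ℝ) :
    ∃ C : ℝ, 0 < C ∧ ∀ (x y : Fin 3 → ℤ) (r s t u : Fin 3),
      (s.val : ℤ) - (r.val : ℤ) = (u.val : ℤ) - (t.val : ℤ) →
      |(x r * y u - x s * y t : ℤ)| ≤ C * (normT x * Lf ξ y + normT y * Lf ξ x) := by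
  have hM : 1 ≤ 1 + |ξ| + ξ ^ 2 := by linarith [abs_nonneg ξ, sq_nonneg ξ]
  refine ⟨2 * (1 + |ξ| + ξ ^ 2), by linarith, fun x y r s t u hrsut => ?_⟩
  have hexp : (r : ℕ) + u = s + t := by omega
  have hru := abs_mul_sub_mul_pow_le ξ x y r u
  have hts := abs_mul_sub_mul_pow_le ξ x y s t
  rw [hexp] at hru
  rw [abs_sub_comm] at hts
  have hxLy := mul_le_mul_of_nonneg_right hM (mul_nonneg (normT_nonneg x) (Lf_nonneg ξ y))
  push_cast
  calc _ ≤ _ := abs_sub_le _ ((x 0 : ℝ) * y 0 * ξ ^ ((s : ℕ) + t)) _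
    _ ≤ _ := by linarith
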